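/- arXiv:2602.08473 — 5 statements merged into one kernel-verified Lean document; each statement's English description precedes it below -/
import Mathlib

section
/- Let f : 2^E → ℝ be submodular with f(∅) ≥ 0, A ⊆ E, and let o_1,...,o_n be an enumeration of O ⊆ E. Define u(o_j) = f({o_1,...,o_j}) - f({o_1,...,o_{j-1}}) and w̄(o_j) = max(0, f((A \ {o_j}) ∪ {o_1,...,o_j}) - f((A \ {o_j}) ∪ {o_1,...,o_{j-1}})). Then Σ_{j=1}^n [u(o_j) - w̄(o_j)] ≤ f(A) - (f(A ∪ O) - f(O)). -/
/-!
The increments of the chain `A ∪ {o_1, ..., o_j}` are bounded by `w̄(o_j)`: they vanish when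
`o_j ∈ A`, and otherwise `A \ {o_j} = A`. Summing, both chains telescope, so the left-hand side is
at most `(f O - f ∅) - (f (A ∪ O) - f A)`, and `f ∅ ≥ 0` concludes.
-/

/-- The prefix `{o_1, ..., o_j}` of an enumeration `o`. -/
def prefSet {α : Type*} [DecidableEq α] {n : ℕ} (o : Fin n → α) (j : ℕ) : Finset α :=
  (Finset.univ.filter fun i : Fin n => (i : ℕ) < j).image o

section PrefSet

variable {α : Type*} [DecidableEq α] {n : ℕ} (o : Fin n → α)

@[simp]
lemma prefSet_zero : prefSet o 0 = ∅ := by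
  simp [prefSet]

lemma prefSet_of_le {j : ℕ} (hj : n ≤ j) : prefSet o j = Finset.univ.image o := by
  unfold prefSet
  congr 1
  ext i
  simpa using i.isLt.trans_le hj

lemma prefSet_succ (j : Fin n) : prefSet o (j + 1) = insert (o j) (prefSet o j) := by
  unfold prefSet
  rw [← Finset.image_insert]
  congr 1
  ext i
  simp only [Finset.mem_filter, Finset.mem_univ, true_and, Finset.mem_insert, Fin.ext_iff]
  omega

end PrefSet

lemma sub_le_max_zero_sdiff_singleton {α : Type*} [DecidableEq α] (f : Finset α → ℝ)
    (A S : Finset α) (x : α) :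
    f (A ∪ insert x S) - f (A ∪ S) ≤ max 0 (f (A \ {x} ∪ insert x S) - f (A \ {x} ∪ S)) := by
  by_cases hx : x ∈ A
  · rw [Finset.union_insert, Finset.insert_eq_of_mem (Finset.mem_union_left S hx), sub_self]
    exact le_max_left _ _
  · rw [Finset.sdiff_singleton_eq_erase, Finset.erase_eq_of_notMem hx]
    exact le_max_right _ _

lemma Fin.sum_univ_sub_succ {M : Type*} [AddCommGroup M] (g : ℕ → M) (n : ℕ) :
    ∑ j : Fin n, (g (j + 1) - g j) = g n - g 0 := by
  rw [Fin.sum_univ_eq_sum_range (fun j => g (j + 1) - g j), Finset.sum_range_sub]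

theorem sum_u_sub_w_le_general {α : Type*} [DecidableEq α] (f : Finset α → ℝ)
    (h0 : f ∅ ≥ 0)
    (A : Finset α) (n : ℕ) (o : Fin n → α)
    (O : Finset α) (hO : O = Finset.image o Finset.univ) :
    ∑ j : Fin n,
      ((f (prefSet o ((j : ℕ) + 1)) - f (prefSet o (j : ℕ)))
        - max 0 (f ((A \ {o j}) ∪ prefSet o ((j : ℕ) + 1))
                  - f ((A \ {o j}) ∪ prefSet o (j : ℕ))))
      ≤ f A - (f (A ∪ O) - f O) := by
  have hO' : prefSet o n = O := by rw [prefSet_of_le o le_rfl, hO]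
  calc _ ≤ ∑ j : Fin n, ((f (prefSet o (j + 1)) - f (prefSet o j))
          - (f (A ∪ prefSet o (j + 1)) - f (A ∪ prefSet o j))) := by
        refine Finset.sum_le_sum fun j _ => sub_le_sub_left ?_ _
        rw [prefSet_succ]
        exact sub_le_max_zero_sdiff_singleton f A _ (o j)
    _ = (f O - f ∅) - (f (A ∪ O) - f A) := by
        rw [Finset.sum_sub_distrib, Fin.sum_univ_sub_succ (fun j => f (prefSet o j)),
          Fin.sum_univ_sub_succ (fun j => f (A ∪ prefSet o j))]
        simp only [hO', prefSet_zero, Finset.union_empty]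
    _ ≤ f A - (f (A ∪ O) - f O) := by linarith

/-- `Σ_j [u(o_j) - w̄(o_j)] ≤ f(A) - (f(A ∪ O) - f(O))`. -/
theorem sum_u_sub_w_le {α : Type*} [DecidableEq α] (f : Finset α → ℝ)
    (hsub : ∀ S T : Finset α, f S + f T ≥ f (S ∪ T) + f (S ∩ T))
    (h0 : f ∅ ≥ 0)
    (A : Finset α) (n : ℕ) (o : Fin n → α) (hinj : Function.Injective o)
    (O : Finset α) (hO : O = Finset.image o Finset.univ) :
    ∑ j : Fin n,
      ((f (prefSet o ((j : ℕ) + 1)) - f (prefSet o (j : ℕ)))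
        - max 0 (f ((A \ {o j}) ∪ prefSet o ((j : ℕ) + 1))
                  - f ((A \ {o j}) ∪ prefSet o (j : ℕ))))
      ≤ f A - (f (A ∪ O) - f O) :=
  sum_u_sub_w_le_general f h0 A n o O hO
end

section
/- Let M be a matroid on ground set V, and let S and T be bases of M. For every partition S_1,...,S_k of S there exists a partition T_1,...,T_k of T such that (S \ S_i) ∪ T_i is a base of M for every i ∈ [k]. (Greene–Magnanti theorem.) -/
/-!
Set `C i = S \ S_i` and look for a partition of `T` into sets `T_i` independent in the
contractions `M ／ C i`. By Edmonds' matroid partition theorem such a partition exists as soon as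
`|Z| ≤ ∑ i, r_{M ／ C i}(Z) = ∑ i, (r(Z ∪ C i) - |C i|)` for all `Z ⊆ T`, and this follows
by applying submodularity to `Z ∪ S` with the pairwise disjoint sets `S_i \ Z` removed one at
a time.
Then every `C i ∪ T_i` is independent, and their sizes add up to `k |S|`, so each is a base.
-/

open Set Function

namespace Set

variable {α ι : Type*} {e : α}

lemma pairwise_disjoint_update_insert [DecidableEq ι] {U : ι → Set α}
    (hU : Pairwise (Disjoint on U)) (he : ∀ j, e ∉ U j) (i : ι) :
    Pairwise (Disjoint on update U i (insert e (U i))) := by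
  intro a b hab
  simp only [onFun, update_apply]
  split_ifs with ha hb hb <;> subst_vars <;> simp_all [hU hab]

lemma iUnion_update_insert [DecidableEq ι] (U : ι → Set α) (i : ι) :
    ⋃ j, update U i (insert e (U i)) j = insert e (⋃ j, U j) := by
  ext x
  simp only [mem_iUnion, mem_insert_iff, update_apply]
  constructor
  · rintro ⟨j, hj⟩
    split_ifs at hj
    · exact hj.imp_right fun h ↦ ⟨i, h⟩
    · exact Or.inr ⟨j, hj⟩
  · rintro (rfl | ⟨j, hj⟩)
    · exact ⟨i, by simp⟩
    · exact ⟨j, by split_ifs <;> simp_all⟩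

lemma sum_ncard_eq_of_iUnion_eq [Fintype ι] {P : ι → Set α} {S : Set α} (hS : S.Finite)
    (hP : Pairwise (Disjoint on P)) (hPS : ⋃ i, P i = S) : ∑ i, (P i).ncard = S.ncard := by
  have hPfin : ∀ i, (P i).Finite := fun i ↦ hS.subset (hPS ▸ subset_iUnion P i)
  rw [← hPS, ncard_iUnion_of_finite hPfin hP, finsum_eq_sum_of_fintype]

lemma sum_ncard_sdiff_add_ncard [Fintype ι] {P : ι → Set α} {S : Set α} (hS : S.Finite)
    (hP : Pairwise (Disjoint on P)) (hPS : ⋃ i, P i = S) :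
    ∑ i, (S \ P i).ncard + S.ncard = Fintype.card ι * S.ncard := by
  have h i : (S \ P i).ncard + (P i).ncard = S.ncard :=
    ncard_sdiff_add_ncard_of_subset (hPS ▸ subset_iUnion P i) hS
  rw [← Finset.card_univ, ← smul_eq_mul, ← Finset.sum_const,
    ← Finset.sum_congr rfl fun i _ ↦ h i, Finset.sum_add_distrib,
    sum_ncard_eq_of_iUnion_eq hS hP hPS]

end Set

namespace Matroid

variable {α : Type*} {M : Matroid α} {B C I X Y : Set α} {e : α}

/- `toNat` sends `⊤` to `0`, so `rk` is only meaningful on sets of finite rank; the lemmas below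
assume the sets involved finite. -/
noncomputable def rk (M : Matroid α) (X : Set α) : ℕ := (M.eRk X).toNat

lemma cast_rk_eq (hX : X.Finite) : (M.rk X : ℕ∞) = M.eRk X :=
  ENat.natCast_toNat ((M.eRk_le_encard X).trans_lt hX.encard_lt_top).ne

@[simp] lemma rk_empty (M : Matroid α) : M.rk ∅ = 0 := by
  simp [rk]

lemma rk_mono (hY : Y.Finite) (hXY : X ⊆ Y) : M.rk X ≤ M.rk Y := by
  have := M.eRk_mono hXY
  rwa [← cast_rk_eq (hY.subset hXY), ← cast_rk_eq hY, Nat.cast_le] at this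

lemma rk_union_add_rk_inter_le (hX : X.Finite) (hY : Y.Finite) :
    M.rk (X ∪ Y) + M.rk (X ∩ Y) ≤ M.rk X + M.rk Y := by
  have := M.eRk_inter_add_eRk_union_le X Y
  rw [← cast_rk_eq (hX.subset inter_subset_left), ← cast_rk_eq (hX.union hY), ← cast_rk_eq hX,
    ← cast_rk_eq hY] at this
  exact_mod_cast (add_comm _ _).trans_le this

lemma Indep.rk_eq_ncard (hI : M.Indep I) (hIfin : I.Finite) : M.rk I = I.ncard := by
  rw [← Nat.cast_inj (R := ℕ∞), cast_rk_eq hIfin, hI.eRk_eq_encard, hIfin.cast_ncard_eq]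

lemma IsBase.rk_eq_ncard_of_subset (hB : M.IsBase B) (hBX : B ⊆ X) (hX : X.Finite) :
    M.rk X = B.ncard := by
  have hBfin := hX.subset hBX
  refine le_antisymm ?_ ((hB.indep.rk_eq_ncard hBfin).symm.trans_le (rk_mono hX hBX))
  rw [← Nat.cast_le (α := ℕ∞), cast_rk_eq hX, hBfin.cast_ncard_eq, hB.encard_eq_eRank]
  exact M.eRk_le_eRank X

lemma rk_singleton_eq_zero (he : ¬ M.IsNonloop e) : M.rk {e} = 0 := by
  have h := (M.eRk_singleton_le e).lt_of_ne (mt eRk_singleton_eq_one_iff.1 he)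
  rw [rk, Order.lt_one_iff.1 h, ENat.toNat_zero]

lemma rk_insert_eq_of_subset (hY : Y.Finite) (hXY : X ⊆ Y) (h : M.rk (insert e X) = M.rk X) :
    M.rk (insert e Y) = M.rk Y := by
  refine le_antisymm ?_ (rk_mono (hY.insert e) (subset_insert e Y))
  have hsub := rk_union_add_rk_inter_le (M := M) ((hY.subset hXY).insert e) hY
  rw [insert_union, union_eq_self_of_subset_left hXY] at hsub
  have := rk_mono (M := M) ((hY.subset hXY).insert e |>.inter_of_left Y)
    (subset_inter (subset_insert e X) hXY)
  omega

lemma Indep.rk_contract_add_ncard (hC : M.Indep C) (hCfin : C.Finite) (hX : X.Finite) :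
    (M ／ C).rk X + C.ncard = M.rk (X ∪ C) := by
  obtain ⟨I, hI, hCI⟩ := hC.subset_isBasis'_of_subset (subset_union_right (s := X))
  have hIC := hI.contract_isBasis'_sdiff_sdiff_of_subset hCI
  have hXC : (M ／ C).eRk X = (M ／ C).eRk ((X ∪ C) \ C) := by
    rw [← eRk_inter_ground, ← (M ／ C).eRk_inter_ground ((X ∪ C) \ C), contract_ground]
    congr 1
    tauto_set
  rw [← Nat.cast_inj (R := ℕ∞), Nat.cast_add, cast_rk_eq hX, cast_rk_eq (hX.union hCfin), hXC,
    ← hIC.encard_eq_eRk, ← hI.encard_eq_eRk, hCfin.cast_ncard_eq,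
    encard_sdiff_add_encard_of_subset hCI]

section Partition

variable {ι : Type*} [Fintype ι] {Ms : ι → Matroid α} {F Z W : Set α}

def IsTight (Ms : ι → Matroid α) (Z : Set α) : Prop := ∑ i, (Ms i).rk Z = Z.ncard

lemma IsTight.union (hF : F.Finite) (h : ∀ Z ⊆ F, Z.ncard ≤ ∑ i, (Ms i).rk Z)
    (hZF : Z ⊆ F) (hWF : W ⊆ F) (hZ : IsTight Ms Z) (hW : IsTight Ms W) :
    IsTight Ms (Z ∪ W) := by
  have hsub : ∑ i, (Ms i).rk (Z ∪ W) + ∑ i, (Ms i).rk (Z ∩ W) ≤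
      ∑ i, (Ms i).rk Z + ∑ i, (Ms i).rk W := by
    simp only [← Finset.sum_add_distrib]
    exact Finset.sum_le_sum fun i _ ↦ rk_union_add_rk_inter_le (hF.subset hZF) (hF.subset hWF)
  have hcard := ncard_union_add_ncard_inter Z W (hF.subset hZF) (hF.subset hWF)
  have hU := h (Z ∪ W) (union_subset hZF hWF)
  have hI := h (Z ∩ W) (inter_subset_left.trans hZF)
  unfold IsTight at hZ hW ⊢
  omega

lemma isTight_iUnion {κ : Type*} [Fintype κ] (hF : F.Finite)
    (h : ∀ Z ⊆ F, Z.ncard ≤ ∑ i, (Ms i).rk Z) {Z : κ → Set α} (hZF : ∀ j, Z j ⊆ F)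
    (hZ : ∀ j, IsTight Ms (Z j)) : IsTight Ms (⋃ j, Z j) := by
  have := Finset.sup_induction (s := Finset.univ) (f := Z) (p := fun Y ↦ Y ⊆ F ∧ IsTight Ms Y)
    ⟨empty_subset F, by simp [IsTight]⟩
    (fun A hA B hB ↦ ⟨union_subset hA.1 hB.1, hA.2.union hF h hA.1 hB.1 hB.2⟩)
    fun j _ ↦ ⟨hZF j, hZ j⟩
  rw [Finset.sup_univ_eq_iSup] at this
  exact this.2

lemma sum_rk_update_add [DecidableEq ι] (Ms : ι → Matroid α) (i : ι) (N : Matroid α)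
    (Z : Set α) : ∑ j, (update Ms i N j).rk Z + (Ms i).rk Z = ∑ j, (Ms j).rk Z + N.rk Z := by
  have h j : (update Ms i N j).rk Z = update (fun j ↦ (Ms j).rk Z) i (N.rk Z) j := by
    rcases eq_or_ne j i with rfl | hji <;> simp [*]
  simp only [h, Finset.sum_update_of_mem (Finset.mem_univ i), Finset.sdiff_singleton_eq_erase,
    ← Finset.add_sum_erase _ _ (Finset.mem_univ i)]
  ring

lemma IsNonloop.isTight_of_sum_rk_update_contract_lt [DecidableEq ι] {i : ι}
    (he : (Ms i).IsNonloop e) (hZ : Z.Finite) (h : Z.ncard ≤ ∑ j, (Ms j).rk Z)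
    (hlt : ∑ j, (update Ms i (Ms i ／ {e}) j).rk Z < Z.ncard) :
    IsTight Ms Z ∧ (Ms i).rk (insert e Z) = (Ms i).rk Z := by
  have hcon := he.indep.rk_contract_add_ncard (finite_singleton e) hZ
  rw [ncard_singleton, union_singleton] at hcon
  have hsum := sum_rk_update_add Ms i (Ms i ／ {e}) Z
  have hmono := rk_mono (M := Ms i) (hZ.insert e) (subset_insert e Z)
  exact ⟨by unfold IsTight; omega, by omega⟩

/- Induction on `F`. Either some `Ms i` has `e` as a nonloop and the condition survives
contracting `e` in `Ms i`, so `e` joins the `i`-th part; or every `Ms i` has a tight set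
`Z i ⊆ F` spanning `e`, and then `⋃ i, Z i` is tight and spans `e` in every `Ms i`,
so adding `e` to it violates the condition. -/
theorem exists_indep_partition_of_ncard_le_sum_rk (hF : F.Finite) (Ms : ι → Matroid α)
    (h : ∀ Z ⊆ F, Z.ncard ≤ ∑ i, (Ms i).rk Z) :
    ∃ U : ι → Set α, Pairwise (Disjoint on U) ∧ ⋃ i, U i = F ∧ ∀ i, (Ms i).Indep (U i) := by
  classical
  induction F, hF using Set.Finite.induction_on generalizing Ms with
  | empty =>
    exact ⟨fun _ ↦ ∅, fun _ _ _ ↦ empty_disjoint _, iUnion_empty, fun i ↦ (Ms i).empty_indep⟩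
  | @insert e F heF hF ih =>
    by_cases hgood : ∃ i, (Ms i).IsNonloop e ∧
        ∀ Z ⊆ F, Z.ncard ≤ ∑ j, (update Ms i (Ms i ／ {e}) j).rk Z
    · obtain ⟨i, he, hi⟩ := hgood
      obtain ⟨U, hUdisj, hUF, hUind⟩ := ih _ hi
      have heU j : e ∉ U j := fun hj ↦ heF (hUF ▸ mem_iUnion_of_mem j hj)
      refine ⟨update U i (insert e (U i)), pairwise_disjoint_update_insert hUdisj heU i,
        by rw [iUnion_update_insert, hUF], fun j ↦ ?_⟩
      rcases eq_or_ne j i with rfl | hji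
      · have hUj := hUind j
        rw [update_self, he.contractElem_indep_iff] at hUj
        simpa using hUj.2
      · simpa [update_of_ne hji] using hUind j
    push Not at hgood
    have hZ i : ∃ Z ⊆ F, IsTight Ms Z ∧ (Ms i).rk (insert e Z) = (Ms i).rk Z := by
      by_cases he : (Ms i).IsNonloop e
      · obtain ⟨Z, hZF, hZ⟩ := hgood i he
        exact ⟨Z, hZF, he.isTight_of_sum_rk_update_contract_lt (hF.subset hZF)
          (h Z (hZF.trans (subset_insert e F))) hZ⟩
      · exact ⟨∅, empty_subset F, by simp [IsTight], by simp [rk_singleton_eq_zero he]⟩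
    choose Z hZF hZt hZe using hZ
    have hWF : (⋃ i, Z i) ⊆ F := iUnion_subset hZF
    have hW := isTight_iUnion (hF.insert e) h (fun i ↦ (hZF i).trans (subset_insert e F)) hZt
    have heW i : (Ms i).rk (insert e (⋃ i, Z i)) = (Ms i).rk (⋃ i, Z i) :=
      rk_insert_eq_of_subset (hF.subset hWF) (subset_iUnion Z i) (hZe i)
    have hcontra := h _ (insert_subset_insert hWF)
    rw [ncard_insert_of_notMem (fun h ↦ heF (hWF h)) (hF.subset hWF),
      Finset.sum_congr rfl fun i _ ↦ heW i] at hcontra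
    unfold IsTight at hW
    omega

end Partition

lemma card_mul_rk_add_rk_sdiff_biUnion_le {κ : Type*} {P : κ → Set α}
    (hP : Pairwise (Disjoint on P)) (hX : X.Finite) (s : Finset κ) :
    s.card * M.rk X + M.rk (X \ ⋃ i ∈ s, P i) ≤ ∑ i ∈ s, M.rk (X \ P i) + M.rk X := by
  classical
  induction s using Finset.induction_on with
  | empty => simp
  | @insert j s hj ih =>
    have hdisj : Disjoint (P j) (⋃ i ∈ s, P i) :=
      disjoint_iUnion₂_right.2 fun i hi ↦ hP (ne_of_mem_of_not_mem hi hj).symm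
    have hunion : (X \ P j) ∪ (X \ ⋃ i ∈ s, P i) = X := by
      rw [← sdiff_inter, hdisj.inter_eq, sdiff_empty]
    have hinter : (X \ P j) ∩ (X \ ⋃ i ∈ s, P i) = X \ ⋃ i ∈ insert j s, P i := by
      rw [Finset.set_biUnion_insert]
      tauto_set
    have hsub := rk_union_add_rk_inter_le (M := M) (hX.sdiff (t := P j))
      (hX.sdiff (t := ⋃ i ∈ s, P i))
    rw [hunion, hinter] at hsub
    rw [Finset.card_insert_of_notMem hj, Finset.sum_insert hj, add_one_mul]
    linarith

lemma IsBase.ncard_le_sum_rk_contract_sdiff {ι : Type*} [Fintype ι] [M.RankFinite]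
    {S Z : Set α} {P : ι → Set α} (hS : M.IsBase S) (hP : Pairwise (Disjoint on P))
    (hPS : ⋃ i, P i = S) (hZ : M.Indep Z) : Z.ncard ≤ ∑ i, (M ／ (S \ P i)).rk Z := by
  have hfold := card_mul_rk_add_rk_sdiff_biUnion_le (M := M) (P := fun i ↦ P i \ Z)
    (fun i j hij ↦ (hP hij).mono sdiff_subset sdiff_subset) (hZ.finite.union hS.finite)
    Finset.univ
  have hZS : (Z ∪ S) \ ⋃ i ∈ Finset.univ, (P i \ Z) = Z := by
    simp only [Finset.mem_univ, iUnion_true, ← iUnion_sdiff, hPS]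
    tauto_set
  have hZi i : (Z ∪ S) \ (P i \ Z) = Z ∪ (S \ P i) := by tauto_set
  have hcon i := (hS.indep.subset (sdiff_subset (t := P i))).rk_contract_add_ncard
    hS.finite.sdiff hZ.finite
  rw [hZS, hZ.rk_eq_ncard hZ.finite, hS.rk_eq_ncard_of_subset subset_union_right
    (hZ.finite.union hS.finite), Finset.card_univ] at hfold
  simp only [hZi, ← hcon, Finset.sum_add_distrib] at hfold
  have := sum_ncard_sdiff_add_ncard hS.finite hP hPS
  omega

lemma Indep.ncard_le_ncard_of_isBase [M.RankFinite] (hI : M.Indep I) (hB : M.IsBase B) :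
    I.ncard ≤ B.ncard := by
  rw [← Nat.cast_le (α := ℕ∞), hI.finite.cast_ncard_eq, hB.finite.cast_ncard_eq,
    hB.encard_eq_eRank]
  exact hI.encard_le_eRank

lemma isBase_of_sum_ncard_eq {ι : Type*} [Fintype ι] [M.RankFinite] {I : ι → Set α}
    (hB : M.IsBase B) (hI : ∀ i, M.Indep (I i))
    (h : ∑ i, (I i).ncard = Fintype.card ι * B.ncard) (i : ι) : M.IsBase (I i) := by
  have hle j : (I j).ncard ≤ B.ncard := (hI j).ncard_le_ncard_of_isBase hB
  rw [← smul_eq_mul, ← Finset.card_univ, ← Finset.sum_const, Finset.sum_eq_sum_iff_of_le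
    fun j _ ↦ hle j] at h
  refine (hI i).isBase_of_eRk_ge (hI i).finite ?_
  rw [(hI i).eRk_eq_encard, ← (hI i).finite.cast_ncard_eq, h i (Finset.mem_univ i),
    hB.finite.cast_ncard_eq, hB.encard_eq_eRank]

end Matroid

open Matroid

/-- Greene–Magnanti: for bases `S`, `T` of a matroid and any partition
`S_1, ..., S_k` of `S`, there exists a partition `T_1, ..., T_k` of `T` with
`(S \ S_i) ∪ T_i` a base for every `i`. -/
theorem greene_magnanti {α : Type*} (M : Matroid α) (hfin : M.E.Finite)
    (S T : Set α) (hS : M.IsBase S) (hT : M.IsBase T)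
    (k : ℕ) (Spart : Fin k → Set α)
    (hSdisj : Pairwise (Function.onFun Disjoint Spart))
    (hSunion : ⋃ i, Spart i = S) :
    ∃ Tpart : Fin k → Set α,
      Pairwise (Function.onFun Disjoint Tpart) ∧
      (⋃ i, Tpart i = T) ∧
      ∀ i, M.IsBase ((S \ Spart i) ∪ Tpart i) := by
  have : M.Finite := ⟨hfin⟩
  have hC i : M.Indep (S \ Spart i) := hS.indep.subset sdiff_subset
  obtain ⟨U, hUdisj, hUT, hUind⟩ := exists_indep_partition_of_ncard_le_sum_rk hT.finite
    (fun i ↦ M ／ (S \ Spart i)) fun Z hZ ↦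
      hS.ncard_le_sum_rk_contract_sdiff hSdisj hSunion (hT.indep.subset hZ)
  simp only [fun i ↦ (hC i).contract_indep_iff, union_comm (U _)] at hUind
  refine ⟨U, hUdisj, hUT, isBase_of_sum_ncard_eq hS (fun i ↦ (hUind i).2) ?_⟩
  have hcard i : ((S \ Spart i) ∪ U i).ncard = (S \ Spart i).ncard + (U i).ncard :=
    ncard_union_eq (hUind i).1.symm hS.finite.sdiff (hT.finite.subset (hUT ▸ subset_iUnion U i))
  rw [Finset.sum_congr rfl fun i _ ↦ hcard i, Finset.sum_add_distrib,
    sum_ncard_eq_of_iUnion_eq hT.finite hUdisj hUT, hT.ncard_eq_ncard_of_isBase hS,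
    ← sum_ncard_sdiff_add_ncard hS.finite hSdisj hSunion]
end

section
/- If α is uniformly distributed on (0,1] and u, W > 0 with u ≤ W, define m_i = W·2^{α−i} for integers i ≥ 0 and r = min{ m_i / u : i ≥ 0, m_i ≥ u }. Then r = 2^β where β is uniformly distributed on [0,1). In particular, for every γ ∈ [0,1), Pr[r ≤ 2^γ] = γ. -/
open MeasureTheory

/-- if `α` is uniform on `(0,1]` and `r` is the smallest ratio `m_i/u`
over thresholds `m_i = W·2^(α−i)` with `m_i ≥ u`, then `r = 2^β` for `β` uniform on
`[0,1)`; in particular `Pr[r ≤ 2^γ] = γ` for every `γ ∈ [0,1)`. -/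
theorem ratio_cdf (u W : ℝ) (hu : 0 < u) (huW : u ≤ W)
    (γ : ℝ) (hγ : γ ∈ Set.Ico (0 : ℝ) 1) :
    volume {a ∈ Set.Ioc (0 : ℝ) 1 |
        sInf {x : ℝ | ∃ i : ℕ, x = W * (2 : ℝ) ^ (a - (i : ℝ)) / u ∧
                        u ≤ W * (2 : ℝ) ^ (a - (i : ℝ))}
          ≤ (2 : ℝ) ^ γ}
      = ENNReal.ofReal γ := by
  obtain ⟨hγ0, hγ1⟩ := hγ
  set c := Real.logb 2 (W / u) with hc
  have hWpos : (0 : ℝ) < W := lt_of_lt_of_le hu huW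
  have hWu : (0 : ℝ) < W / u := div_pos hWpos hu
  have h2c : (2 : ℝ) ^ c = W / u := Real.rpow_logb two_pos (by norm_num) hWu
  have hc0 : 0 ≤ c := Real.logb_nonneg one_lt_two ((one_le_div hu).mpr huW)
  -- Step 1: rewrite the condition pointwise as `Int.fract (a + c) ≤ γ`
  have key : ∀ a ∈ Set.Ioc (0 : ℝ) 1,
      (sInf {x : ℝ | ∃ i : ℕ, x = W * (2 : ℝ) ^ (a - (i : ℝ)) / u ∧
                        u ≤ W * (2 : ℝ) ^ (a - (i : ℝ))} ≤ (2 : ℝ) ^ γ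
        ↔ Int.fract (a + c) ≤ γ) := by
    intro a ha
    set s := a + c with hs
    have hs0 : 0 < s := add_pos_of_pos_of_nonneg ha.1 hc0
    have hx : ∀ i : ℕ, W * (2 : ℝ) ^ (a - (i : ℝ)) / u = (2 : ℝ) ^ (s - (i : ℝ)) := by
      intro i
      have : s - (i : ℝ) = c + (a - (i : ℝ)) := by rw [hs]; ring
      rw [this, Real.rpow_add two_pos, h2c]
      ring
    have hcond : ∀ i : ℕ, (u ≤ W * (2 : ℝ) ^ (a - (i : ℝ))) ↔ (i : ℝ) ≤ s := by
      intro i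
      rw [← one_le_div hu, hx i]
      rw [show (1 : ℝ) = (2 : ℝ) ^ (0 : ℝ) by simp [Real.rpow_zero]]
      rw [Real.rpow_le_rpow_left_iff one_lt_two]
      constructor <;> intro h <;> linarith
    set n : ℕ := ⌊s⌋₊ with hn
    have hns : (n : ℝ) ≤ s := Nat.floor_le hs0.le
    have hfr : s - (n : ℝ) = Int.fract s := by
      have : ((n : ℤ) : ℝ) = ((⌊s⌋ : ℤ) : ℝ) := by
        rw [hn, ← Int.floor_toNat, Int.toNat_of_nonneg (Int.floor_nonneg.mpr hs0.le)]
      rw [Int.fract]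
      push_cast at this ⊢
      linarith [this]
    have hleast : IsLeast {x : ℝ | ∃ i : ℕ, x = W * (2 : ℝ) ^ (a - (i : ℝ)) / u ∧
                        u ≤ W * (2 : ℝ) ^ (a - (i : ℝ))} ((2 : ℝ) ^ (s - (n : ℝ))) := by
      constructor
      · exact ⟨n, (hx n).symm, (hcond n).mpr hns⟩
      · rintro x ⟨i, rfl, hi⟩
        rw [hx i]
        have hin : (i : ℝ) ≤ (n : ℝ) := by
          exact_mod_cast Nat.le_floor ((hcond i).mp hi)
        exact Real.rpow_le_rpow_of_exponent_le one_le_two (by linarith)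
    rw [hleast.csInf_eq, Real.rpow_le_rpow_left_iff one_lt_two, hfr]
  -- rewrite the set
  have hset : {a ∈ Set.Ioc (0 : ℝ) 1 |
        sInf {x : ℝ | ∃ i : ℕ, x = W * (2 : ℝ) ^ (a - (i : ℝ)) / u ∧
                        u ≤ W * (2 : ℝ) ^ (a - (i : ℝ))}
          ≤ (2 : ℝ) ^ γ}
      = {a ∈ Set.Ioc (0 : ℝ) 1 | Int.fract (a + c) ≤ γ} := by
    ext a
    simp only [Set.mem_setOf_eq, Set.mem_sep_iff]
    exact and_congr_right fun ha => key a ha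
  rw [hset]
  -- Step 2: measure computation.
  set d := Int.fract c with hd
  have hd0 : 0 ≤ d := Int.fract_nonneg c
  have hd1 : d < 1 := Int.fract_lt_one c
  have hfract : ∀ a : ℝ, Int.fract (a + c) = Int.fract (a + d) := by
    intro a
    have : a + c = a + d + (⌊c⌋ : ℝ) := by rw [hd, Int.fract]; ring
    rw [this, Int.fract_add_intCast]
  have hset2 : {a ∈ Set.Ioc (0 : ℝ) 1 | Int.fract (a + c) ≤ γ}
      = Set.Ioc 0 (γ - d) ∪ Set.Icc (1 - d) (min 1 (1 - d + γ)) := by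
    ext a
    simp only [Set.mem_sep_iff, Set.mem_Ioc, Set.mem_union, Set.mem_Icc, le_min_iff,
      Set.mem_setOf_eq]
    rw [hfract a]
    constructor
    · rintro ⟨⟨ha0, ha1⟩, hfa⟩
      rcases lt_or_ge (a + d) 1 with h1 | h1
      · left
        have : Int.fract (a + d) = a + d := Int.fract_eq_self.mpr ⟨by linarith, h1⟩
        rw [this] at hfa
        exact ⟨ha0, by linarith⟩
      · right
        have : Int.fract (a + d) = a + d - 1 := by
          have h2 : Int.fract (a + d - 1 + (1 : ℤ)) = Int.fract (a + d - 1) :=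
            Int.fract_add_intCast _ _
          have h3 : Int.fract (a + d - 1) = a + d - 1 :=
            Int.fract_eq_self.mpr ⟨by linarith, by linarith⟩
          calc Int.fract (a + d) = Int.fract (a + d - 1 + (1 : ℤ)) := by norm_num
            _ = a + d - 1 := by rw [h2, h3]
        rw [this] at hfa
        exact ⟨by linarith, ha1, by linarith⟩
    · rintro (⟨ha0, ha1⟩ | ⟨ha0, ha1, ha2⟩)
      · have h1 : a + d < 1 := by linarith
        have : Int.fract (a + d) = a + d := Int.fract_eq_self.mpr ⟨by linarith, h1⟩
        exact ⟨⟨ha0, by linarith⟩, by rw [this]; linarith⟩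
      · have h1 : 1 ≤ a + d := by linarith
        have : Int.fract (a + d) = a + d - 1 := by
          have h2 : Int.fract (a + d - 1 + (1 : ℤ)) = Int.fract (a + d - 1) :=
            Int.fract_add_intCast _ _
          have h3 : Int.fract (a + d - 1) = a + d - 1 :=
            Int.fract_eq_self.mpr ⟨by linarith, by linarith⟩
          calc Int.fract (a + d) = Int.fract (a + d - 1 + (1 : ℤ)) := by norm_num
            _ = a + d - 1 := by rw [h2, h3]
        exact ⟨⟨by linarith, ha1⟩, by rw [this]; linarith⟩
  rw [hset2]
  have hdisj : Disjoint (Set.Ioc (0 : ℝ) (γ - d)) (Set.Icc (1 - d) (min 1 (1 - d + γ))) := by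
    rw [Set.disjoint_left]
    rintro a ⟨_, ha2⟩ ⟨hb1, _⟩
    linarith
  rw [measure_union hdisj measurableSet_Icc, Real.volume_Ioc, Real.volume_Icc]
  rcases le_total γ d with h | h
  · have hmin : min 1 (1 - d + γ) = 1 - d + γ := min_eq_right (by linarith)
    rw [hmin]
    have : ENNReal.ofReal (γ - d - 0) = 0 := by
      rw [ENNReal.ofReal_eq_zero]; linarith
    rw [this, zero_add]
    congr 1
    ring
  · have hmin : min 1 (1 - d + γ) = 1 := min_eq_left (by linarith)
    rw [hmin]
    rw [show γ - d - 0 = γ - d by ring, show (1 : ℝ) - (1 - d) = d by ring]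
    rw [← ENNReal.ofReal_add (by linarith) hd0]
    congr 1
    ring
end

section
/- For every real d ≥ 2, ∫_0^1 min( 2^β, (1 − (1/2)(1 − 1/d)) / (1 − 2^{−β}(1 − 1/d)) ) dβ = (1 − 1/d)/(2 ln 2) + (d + 1)/(2d). -/
/-!
Write `a = 1 - 1/d ∈ [0, 1)`. Since `1 - 2^(-β) a = (2^β - a) / 2^β`, the second branch is
`(1 - a/2) 2^β / (2^β - a)`, and it lies below `2^β` exactly when `2^β ≥ 1 + a/2`. Below that
crossing point the integral of `2^β` is `a / (2 log 2)`. Above it the antiderivative is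
`(1 - a/2) log (2^β - a) / log 2`, and between `2^β = 1 + a/2` and `2^β = 2` the logarithm grows
by exactly `log 2`, because `2 - a = 2 (1 - a/2)`; this piece contributes `1 - a/2`.
-/

open Real Set MeasureTheory

noncomputable section

def shiftIntegrand (a β : ℝ) : ℝ :=
  min ((2 : ℝ) ^ β) ((1 - (1/2) * a) / (1 - (2 : ℝ) ^ (-β) * a))

def crossPoint (a : ℝ) : ℝ := logb 2 (1 + a / 2)

lemma two_rpow_crossPoint {a : ℝ} (ha : 0 ≤ a) : (2 : ℝ) ^ crossPoint a = 1 + a / 2 :=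
  rpow_logb two_pos (by norm_num) (by linarith)

lemma crossPoint_nonneg {a : ℝ} (ha : 0 ≤ a) : 0 ≤ crossPoint a :=
  logb_nonneg one_lt_two (by linarith)

lemma crossPoint_le_one {a : ℝ} (ha : 0 ≤ a) (ha1 : a < 1) : crossPoint a ≤ 1 := by
  rw [crossPoint, logb_le_iff_le_rpow one_lt_two (by linarith), rpow_one]
  linarith

lemma two_rpow_le_iff_le_crossPoint {a β : ℝ} (ha : 0 ≤ a) :
    (2 : ℝ) ^ β ≤ 1 + a / 2 ↔ β ≤ crossPoint a :=
  (le_logb_iff_rpow_le one_lt_two (by linarith)).symm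

lemma le_two_rpow_iff_crossPoint_le {a β : ℝ} (ha : 0 ≤ a) :
    1 + a / 2 ≤ (2 : ℝ) ^ β ↔ crossPoint a ≤ β :=
  (logb_le_iff_le_rpow one_lt_two (by linarith)).symm

lemma lt_two_rpow {a β : ℝ} (ha1 : a < 1) (hβ : 0 ≤ β) : a < (2 : ℝ) ^ β :=
  ha1.trans_le (one_le_rpow one_le_two hβ)

lemma div_one_sub_inv_mul {K : Type*} [Field K] {x : K} (k a : K) (hx : x ≠ 0) :
    k / (1 - x⁻¹ * a) = k * x / (x - a) := by
  rw [div_eq_div_iff_comm]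
  field_simp

lemma shiftIntegrand_eq_min (a β : ℝ) :
    shiftIntegrand a β = min (2 ^ β) ((1 - a / 2) * 2 ^ β / (2 ^ β - a)) := by
  rw [shiftIntegrand, rpow_neg zero_le_two,
    div_one_sub_inv_mul _ _ (rpow_pos_of_pos two_pos β).ne']
  ring_nf

lemma shiftIntegrand_eq_left {a β : ℝ} (hβ : a < (2 : ℝ) ^ β)
    (hc : (2 : ℝ) ^ β ≤ 1 + a / 2) : shiftIntegrand a β = 2 ^ β := by
  refine (shiftIntegrand_eq_min a β).trans (min_eq_left ?_)
  rw [le_div_iff₀ (sub_pos.2 hβ)]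
  nlinarith [rpow_pos_of_pos two_pos β]

lemma shiftIntegrand_eq_right {a β : ℝ} (hβ : a < (2 : ℝ) ^ β)
    (hc : 1 + a / 2 ≤ (2 : ℝ) ^ β) :
    shiftIntegrand a β = (1 - a / 2) * 2 ^ β / (2 ^ β - a) := by
  refine (shiftIntegrand_eq_min a β).trans (min_eq_right ?_)
  rw [div_le_iff₀ (sub_pos.2 hβ)]
  nlinarith [rpow_pos_of_pos two_pos β]

lemma continuousOn_shiftIntegrand {a : ℝ} (ha1 : a < 1) :
    ContinuousOn (shiftIntegrand a) (Ici 0) := by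
  rw [show shiftIntegrand a = _ from funext (shiftIntegrand_eq_min a)]
  exact .inf (by fun_prop (disch := norm_num))
    (.div (by fun_prop (disch := norm_num)) (by fun_prop (disch := norm_num))
      fun β hβ => (sub_pos.2 (lt_two_rpow ha1 hβ)).ne')

lemma intervalIntegrable_shiftIntegrand {a s t : ℝ} (ha1 : a < 1) (hs : 0 ≤ s) (ht : 0 ≤ t) :
    IntervalIntegrable (shiftIntegrand a) volume s t :=
  ((continuousOn_shiftIntegrand ha1).mono fun _ hx => (le_min hs ht).trans hx.1).intervalIntegrable

lemma hasDerivAt_log_rpow_sub {a b β : ℝ} (hb : 0 < b) (h : b ^ β ≠ a) :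
    HasDerivAt (fun x => log (b ^ x - a)) (b ^ β * log b / (b ^ β - a)) β := by
  simpa [div_eq_inv_mul] using
    ((hasStrictDerivAt_const_rpow hb β).hasDerivAt.sub_const a).log (sub_ne_zero.2 h)

lemma integral_shiftIntegrand_zero_crossPoint {a : ℝ} (ha0 : 0 ≤ a) (ha1 : a < 1) :
    ∫ β in (0 : ℝ)..crossPoint a, shiftIntegrand a β = a / (2 * log 2) := by
  have hc := crossPoint_nonneg ha0
  have hderiv : ∀ β ∈ uIcc 0 (crossPoint a),
      HasDerivAt (fun β => 2 ^ β / log 2) (shiftIntegrand a β) β := by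
    intro β hβ
    rw [uIcc_of_le hc] at hβ
    rw [shiftIntegrand_eq_left (lt_two_rpow ha1 hβ.1)
      ((two_rpow_le_iff_le_crossPoint ha0).2 hβ.2)]
    simpa [mul_div_assoc, (log_pos one_lt_two).ne'] using
      (hasStrictDerivAt_const_rpow two_pos β).hasDerivAt.div_const (log 2)
  rw [intervalIntegral.integral_eq_sub_of_hasDerivAt hderiv
    (intervalIntegrable_shiftIntegrand ha1 le_rfl hc), two_rpow_crossPoint ha0, rpow_zero]
  field_simp
  ring

lemma integral_shiftIntegrand_crossPoint_one {a : ℝ} (ha0 : 0 ≤ a) (ha1 : a < 1) :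
    ∫ β in crossPoint a..1, shiftIntegrand a β = 1 - a / 2 := by
  have hc := crossPoint_nonneg ha0
  have hc1 := crossPoint_le_one ha0 ha1
  have hderiv : ∀ β ∈ uIcc (crossPoint a) 1,
      HasDerivAt (fun β => (1 - a / 2) / log 2 * log (2 ^ β - a)) (shiftIntegrand a β) β := by
    intro β hβ
    rw [uIcc_of_le hc1] at hβ
    have hβa := lt_two_rpow ha1 (hc.trans hβ.1)
    rw [shiftIntegrand_eq_right hβa ((le_two_rpow_iff_crossPoint_le ha0).2 hβ.1)]
    have hlog2 := (log_pos one_lt_two).ne'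
    rw [show (1 - a / 2) * 2 ^ β / (2 ^ β - a)
        = (1 - a / 2) / log 2 * (2 ^ β * log 2 / (2 ^ β - a)) by field_simp]
    exact (hasDerivAt_log_rpow_sub two_pos hβa.ne').const_mul _
  have h2a : 2 - a ≠ 0 := by linarith
  rw [intervalIntegral.integral_eq_sub_of_hasDerivAt hderiv
      (intervalIntegrable_shiftIntegrand ha1 hc zero_le_one), two_rpow_crossPoint ha0, rpow_one,
    ← mul_sub, ← log_div h2a (by linarith),
    show (2 - a) / (1 + a / 2 - a) = 2 by rw [div_eq_iff (by linarith)]; ring]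
  field_simp

lemma integral_shiftIntegrand {a : ℝ} (ha0 : 0 ≤ a) (ha1 : a < 1) :
    ∫ β in (0 : ℝ)..1, shiftIntegrand a β = a / (2 * log 2) + (1 - a / 2) := by
  have hc := crossPoint_nonneg ha0
  rw [← intervalIntegral.integral_add_adjacent_intervals
      (intervalIntegrable_shiftIntegrand ha1 le_rfl hc)
      (intervalIntegrable_shiftIntegrand ha1 hc zero_le_one),
    integral_shiftIntegrand_zero_crossPoint ha0 ha1, integral_shiftIntegrand_crossPoint_one ha0 ha1]

end

/-- the key integral identity for the random-shift analysis. -/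
theorem integral_min_identity (d : ℝ) (hd : 2 ≤ d) :
    ∫ β in (0:ℝ)..1,
        min ((2 : ℝ) ^ β)
          ((1 - (1/2) * (1 - 1/d)) / (1 - (2 : ℝ) ^ (-β) * (1 - 1/d)))
      = (1 - 1/d) / (2 * Real.log 2) + (d + 1) / (2 * d) := by
  have hd0 : 0 < d := by linarith
  have ha0 : 0 ≤ 1 - 1 / d := by rw [sub_nonneg, div_le_one hd0]; linarith
  have ha1 : 1 - 1 / d < 1 := by simpa using hd0
  rw [show (d + 1) / (2 * d) = 1 - (1 - 1 / d) / 2 by field_simp; ring]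
  exact integral_shiftIntegrand ha0 ha1
end

section
/- Let d ≥ 2, r ∈ [1,2), u > 0, and suppose there exists a real m with w̄ ≤ m and u·r/2 ≥ m and m ≤ N, where w̄ ≤ u and N ≥ 0 are reals. If u > m, then ((1 − (1/2)(1 − 1/d)) / (1 − r^{−1}(1 − 1/d))) · u ≤ N + d·(u − w̄). -/
/-- the large-discrepancy bound in the charging analysis. -/
theorem charging_bound_large (d r u w m N : ℝ)
    (hd : 2 ≤ d) (hr1 : 1 ≤ r) (hr2 : r < 2) (hu : 0 < u)
    (hw0 : 0 ≤ w) (hwu : w ≤ u) (hwm : w ≤ m) (hmN : m ≤ N)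
    (hmr : m ≤ u * r / 2) (hum : u > m) :
    ((1 - (1/2) * (1 - 1/d)) / (1 - r⁻¹ * (1 - 1/d))) * u ≤ N + d * (u - w) := by
  have hd0 : (0:ℝ) < d := by linarith
  have hr0 : (0:ℝ) < r := by linarith
  have hrinv : r⁻¹ ≤ 1 := inv_le_one_of_one_le₀ hr1
  have ha : 0 ≤ 1 - 1/d := by
    have : 1/d ≤ 1/2 := by
      apply one_div_le_one_div_of_le <;> linarith
    linarith
  have hden : 0 < 1 - r⁻¹ * (1 - 1/d) := by
    have h2 : r⁻¹ * (1 - 1/d) ≤ 1 * (1 - 1/d) := mul_le_mul_of_nonneg_right hrinv ha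
    have h1d : 0 < 1/d := by positivity
    linarith
  rw [div_mul_eq_mul_div, div_le_iff₀ hden]
  have hfin : (1 - (1/2) * (1 - 1/d)) * u
      ≤ (d*u - (d-1)*(u*r/2)) * (1 - r⁻¹ * (1 - 1/d)) := by
    rw [← sub_nonneg]
    have heq : (d*u - (d-1)*(u*r/2)) * (1 - r⁻¹ * (1 - 1/d)) - (1 - (1/2) * (1 - 1/d)) * u
        = u * (d * ((d-1) * ((r-1) * (2-r)))) / (2*(d*r)) := by
      field_simp
      ring
    rw [heq]
    apply div_nonneg _ (by positivity)
    apply mul_nonneg hu.le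
    apply mul_nonneg hd0.le
    apply mul_nonneg (by linarith)
    apply mul_nonneg (by linarith) (by linarith)
  have h3 : (d*u - (d-1)*(u*r/2)) * (1 - r⁻¹ * (1 - 1/d))
      ≤ (d*u - (d-1)*m) * (1 - r⁻¹ * (1 - 1/d)) := by
    apply mul_le_mul_of_nonneg_right _ hden.le
    nlinarith
  have h1 : (d*u - (d-1)*m) * (1 - r⁻¹ * (1 - 1/d))
      ≤ (N + d * (u - w)) * (1 - r⁻¹ * (1 - 1/d)) := by
    apply mul_le_mul_of_nonneg_right _ hden.le
    nlinarith
  linarith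
end
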